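/- Let γ ∈ (0,1], let f : ℝ^m → ℝ be Borel measurable and integrable with respect to every ν ∈ 𝒟₁(ℝ^m), and define K_f(ν) := ∫ f dν. Then K_f is indifferent to γ if and only if there exists α > 0 such that f(γ·c) = α·f(c) + (1 − α)·f(0) for all c ∈ ℝ^m. -/

import Mathlib

/-!
Test the indifference on two-point lotteries `t δ_x + (1 - t) δ_y` and write
`g := f ∘ (γ • ·)`, so that `∫ f d(S_γ ν) = ∫ g dν`. Then `g` orders the expectations of
lotteries at least as `f` does; comparing a Dirac mass with a lottery of the same `f`-expectation
in both directions shows that `g` respects every convex combination of `f`-values. Hence the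
points `(f x, g x)` lie on one line of nonnegative slope `α`, i.e. `g - g 0 = α (f - f 0)`; the
slope vanishes only when `f` is constant, since `f` and `g` have the same range. Conversely, such
an affine relation gives `∫ f d(S_γ ν) = α ∫ f dν + (1 - α) f 0`, monotone in `∫ f dν`.
-/

open MeasureTheory

noncomputable section

abbrev Rm (m : ℕ) := Fin m → ℝ

/-- The ℓ¹ norm on ℝ^m. -/
def norm1 {m : ℕ} (x : Rm m) : ℝ := ∑ i, |x i|

/-- Finite first moment with respect to the ℓ¹ norm. -/
def FiniteFirstMoment {m : ℕ} (ν : Measure (Rm m)) : Prop :=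
  Integrable (fun x => norm1 x) ν

/-- Pushforward of `ν` under scaling by `γ`. -/
def Sgamma {m : ℕ} (γ : ℝ) (ν : Measure (Rm m)) : Measure (Rm m) :=
  ν.map (fun x => γ • x)

/-- `K` is indifferent to `γ`: `K ν ≥ K ν'` implies `K (S_γ ν) ≥ K (S_γ ν')`
for all `ν, ν' ∈ 𝒟₁(ℝ^m)`. -/
def IndiffGamma {m : ℕ} (γ : ℝ) (K : Measure (Rm m) → ℝ) : Prop :=
  ∀ ν ν' : Measure (Rm m),
    IsProbabilityMeasure ν → FiniteFirstMoment ν →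
    IsProbabilityMeasure ν' → FiniteFirstMoment ν' →
    K ν' ≤ K ν → K (Sgamma γ ν') ≤ K (Sgamma γ ν)

open Set

def LotteryMonotone {X : Type*} (u v : X → ℝ) : Prop :=
  ∀ t ∈ Icc (0 : ℝ) 1, ∀ s ∈ Icc (0 : ℝ) 1, ∀ x y x' y' : X,
    t * u x + (1 - t) * u y ≤ s * u x' + (1 - s) * u y' →
      t * v x + (1 - t) * v y ≤ s * v x' + (1 - s) * v y'

namespace LotteryMonotone

variable {X : Type*} {u v : X → ℝ}

lemma le (h : LotteryMonotone u v) {x y : X} (hxy : u x ≤ u y) : v x ≤ v y := by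
  simpa using h 1 (by simp) 1 (by simp) x x y y (by simpa using hxy)

lemma eq_mix (h : LotteryMonotone u v) {t : ℝ} (ht : t ∈ Icc (0 : ℝ) 1) {x y z : X}
    (hz : u z = t * u x + (1 - t) * u y) : v z = t * v x + (1 - t) * v y := by
  have hle := h t ht 1 (by simp) x y z z (by simp [hz])
  have hge := h 1 (by simp) t ht z z x y (by simp [hz])
  simp only [one_mul, sub_self, zero_mul, add_zero] at hle hge
  exact le_antisymm hge hle

lemma collinear_of_mem_Icc (h : LotteryMonotone u v) {x y z : X} (hxy : u x < u y)
    (hz : u z ∈ Icc (u x) (u y)) :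
    (v z - v x) * (u y - u x) = (v y - v x) * (u z - u x) := by
  have hpos : 0 < u y - u x := sub_pos.mpr hxy
  set t := (u y - u z) / (u y - u x) with ht
  have ht01 : t ∈ Icc (0 : ℝ) 1 :=
    ⟨div_nonneg (by linarith [hz.2]) hpos.le, (div_le_one hpos).mpr (by linarith [hz.1])⟩
  have hmix : u z = t * u x + (1 - t) * u y := by
    rw [ht]; field_simp; ring
  have hv := h.eq_mix ht01 hmix
  rw [ht] at hv
  field_simp at hv
  linear_combination hv

lemma collinear_of_lt (h : LotteryMonotone u v) {a b : X} (hab : u a < u b) (c : X) :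
    (v c - v a) * (u b - u a) = (v b - v a) * (u c - u a) := by
  rcases le_or_gt (u c) (u a) with hca | hac
  · linear_combination -h.collinear_of_mem_Icc (hca.trans_lt hab) ⟨hca, hab.le⟩
  rcases le_or_gt (u c) (u b) with hcb | hbc
  · exact h.collinear_of_mem_Icc hab ⟨hac.le, hcb⟩
  · linear_combination -h.collinear_of_mem_Icc (hab.trans hbc) ⟨hab.le, hbc.le⟩

lemma exists_sub_eq_mul_sub (h : LotteryMonotone u v) (x₀ : X) :
    ∃ α ≥ 0, ∀ x, v x - v x₀ = α * (u x - u x₀) := by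
  by_cases hconst : ∃ a b, u a < u b
  · obtain ⟨a, b, hab⟩ := hconst
    have hpos : 0 < u b - u a := sub_pos.mpr hab
    refine ⟨(v b - v a) / (u b - u a), div_nonneg (sub_nonneg.mpr (h.le hab.le)) hpos.le,
      fun x => ?_⟩
    have hx := h.collinear_of_lt hab x
    have hx₀ := h.collinear_of_lt hab x₀
    field_simp
    linear_combination hx - hx₀
  · simp only [not_exists, not_lt] at hconst
    exact ⟨0, le_rfl, fun x => by
      simp [le_antisymm (h.le (hconst x x₀)) (h.le (hconst x₀ x))]⟩

end LotteryMonotone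

section Lottery

variable {X : Type*} [MeasurableSpace X]

def lottery (t : ℝ) (x y : X) : Measure X :=
  ENNReal.ofReal t • Measure.dirac x + ENNReal.ofReal (1 - t) • Measure.dirac y

lemma isProbabilityMeasure_lottery {t : ℝ} (ht : t ∈ Icc (0 : ℝ) 1) (x y : X) :
    IsProbabilityMeasure (lottery t x y) := by
  constructor
  simp only [lottery, Measure.add_apply, Measure.smul_apply, smul_eq_mul, measure_univ,
    mul_one]
  rw [← ENNReal.ofReal_add ht.1 (sub_nonneg.mpr ht.2)]
  simp

lemma integrable_lottery [MeasurableSingletonClass X] (f : X → ℝ) (t : ℝ) (x y : X) :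
    Integrable f (lottery t x y) :=
  ((integrable_dirac enorm_lt_top).smul_measure ENNReal.ofReal_ne_top).add_measure
    ((integrable_dirac enorm_lt_top).smul_measure ENNReal.ofReal_ne_top)

lemma integral_lottery [MeasurableSingletonClass X] (f : X → ℝ) {t : ℝ} (ht : t ∈ Icc (0 : ℝ) 1)
    (x y : X) :
    ∫ z, f z ∂(lottery t x y) = t * f x + (1 - t) * f y := by
  rw [lottery, integral_add_measure
      ((integrable_dirac enorm_lt_top).smul_measure ENNReal.ofReal_ne_top)
      ((integrable_dirac enorm_lt_top).smul_measure ENNReal.ofReal_ne_top),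
    integral_smul_measure, integral_smul_measure, integral_dirac, integral_dirac,
    ENNReal.toReal_ofReal ht.1, ENNReal.toReal_ofReal (sub_nonneg.mpr ht.2), smul_eq_mul,
    smul_eq_mul]

end Lottery

lemma integral_Sgamma {m : ℕ} {γ : ℝ} (hγ : γ ≠ 0) (f : Rm m → ℝ) (ν : Measure (Rm m)) :
    ∫ x, f x ∂(Sgamma γ ν) = ∫ x, f (γ • x) ∂ν :=
  (measurableEmbedding_const_smul₀ hγ).integral_map f

lemma IndiffGamma.lotteryMonotone {m : ℕ} {γ : ℝ} {f : Rm m → ℝ}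
    (H : IndiffGamma γ (fun ν => ∫ x, f x ∂ν)) (hγ : γ ≠ 0) :
    LotteryMonotone f (fun x => f (γ • x)) := by
  intro t ht s hs x y x' y' hle
  have := H (lottery s x' y') (lottery t x y) (isProbabilityMeasure_lottery hs x' y')
    (integrable_lottery _ s x' y') (isProbabilityMeasure_lottery ht x y)
    (integrable_lottery _ t x y) (by simpa only [integral_lottery f ht, integral_lottery f hs])
  simpa only [integral_Sgamma hγ, integral_lottery _ ht, integral_lottery _ hs] using this

lemma integral_Sgamma_of_affine {m : ℕ} {γ α : ℝ} (hγ : γ ≠ 0) {f : Rm m → ℝ}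
    (hα : ∀ c : Rm m, f (γ • c) = α * f c + (1 - α) * f 0)
    (ν : Measure (Rm m)) [IsProbabilityMeasure ν] (hint : Integrable f ν) :
    ∫ x, f x ∂(Sgamma γ ν) = α * ∫ x, f x ∂ν + (1 - α) * f 0 := by
  simp only [integral_Sgamma hγ, hα]
  rw [integral_add (hint.const_mul α) (integrable_const _), integral_const_mul,
    integral_const, probReal_univ, one_smul]

theorem expectedUtility_indiffGamma_iff (m : ℕ)
    (γ : ℝ) (hγ : γ ∈ Set.Ioc (0 : ℝ) 1)
    (f : Rm m → ℝ)
    (hint : ∀ ν : Measure (Rm m), IsProbabilityMeasure ν → FiniteFirstMoment ν →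
      Integrable f ν) :
    IndiffGamma γ (fun ν => ∫ x, f x ∂ν) ↔
      ∃ α : ℝ, 0 < α ∧ ∀ c : Rm m, f (γ • c) = α * f c + (1 - α) * f 0 := by
  have hγ0 : γ ≠ 0 := hγ.1.ne'
  constructor
  · intro H
    obtain ⟨α, hα0, hα⟩ := (H.lotteryMonotone hγ0).exists_sub_eq_mul_sub 0
    simp only [smul_zero] at hα
    rcases hα0.lt_or_eq with hαpos | rfl
    · exact ⟨α, hαpos, fun c => by linarith [hα c]⟩
    · have hconst : ∀ c, f c = f 0 := fun c =>
        sub_eq_zero.mp (by simpa [smul_inv_smul₀ hγ0] using hα (γ⁻¹ • c))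
      exact ⟨1, one_pos, fun c => by simp [hconst]⟩
  · rintro ⟨α, hαpos, hα⟩ ν ν' hν hν₁ hν' hν'₁ hle
    simp only [integral_Sgamma_of_affine hγ0 hα ν (hint ν hν hν₁),
      integral_Sgamma_of_affine hγ0 hα ν' (hint ν' hν' hν'₁)] at hle ⊢
    gcongr
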